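/- arXiv:2108.01467 — 4 statements merged into one kernel-verified Lean document; each statement's English description precedes it below -/
import Mathlib

section
/- Let Λ_TU = {(W_j, Λ_j, v_j)}_{j∈J} be a (T,U)-controlled g-fusion frame for H with bounds A, B and frame operator S_C, and suppose S is a bounded operator on H with S S_C = S_C S = I_H which commutes with both T and U. Then the family {v_j² T* P_{W_j} Λ_j* T_j U}_{j∈J}, where T_j = Λ_j P_{W_j} S, is a resolution of the identity operator on H; that is, for every f ∈ H, f = ∑_{j∈J} v_j² T* P_{W_j} Λ_j* Λ_j P_{W_j} S U f, the series converging in H. -/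
open ContinuousLinearMap
open scoped ComplexInnerProductSpace

/-- The orthogonal projection of `H` onto a closed subspace `W`, viewed as an operator
`H →L[ℂ] H`. -/
noncomputable def proj {H : Type*} [NormedAddCommGroup H] [InnerProductSpace ℂ H]
    (W : Submodule ℂ H) [Submodule.HasOrthogonalProjection W] : H →L[ℂ] H :=
  W.subtypeL.comp (Submodule.orthogonalProjectionOnto W)

/-- if `Λ_TU` is a `(T,U)`-controlled g-fusion frame with frame operator `S_C`
and `S = S_C⁻¹` commutes with `T` and `U`, then `{v_j² T* P_{W_j} Λ_j* T_j U}` with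
`T_j = Λ_j P_{W_j} S` is a resolution of the identity: for every `f`,
`f = ∑_j v_j² T* P_{W_j} Λ_j* Λ_j P_{W_j} S U f` (unconditional convergence). -/
theorem stmt7
    {H : Type*} [NormedAddCommGroup H] [InnerProductSpace ℂ H] [CompleteSpace H]
    {J : Type*} [Countable J]
    {Hj : J → Type*} [∀ j, NormedAddCommGroup (Hj j)] [∀ j, InnerProductSpace ℂ (Hj j)]
    [∀ j, CompleteSpace (Hj j)]
    (W : J → Submodule ℂ H) [∀ j, CompleteSpace (W j)]
    (v : J → ℝ) (hv : ∀ j, 0 < v j)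
    (Λ : ∀ j, H →L[ℂ] Hj j)
    (T U : H →L[ℂ] H)
    -- `T` and `U` are invertible
    (Tinv Uinv : H →L[ℂ] H)
    (hT₁ : Tinv ∘L T = 1) (hT₂ : T ∘L Tinv = 1)
    (hU₁ : Uinv ∘L U = 1) (hU₂ : U ∘L Uinv = 1)
    -- `Λ_TU` is a `(T,U)`-controlled g-fusion frame with bounds `A, B`
    (A B : ℝ) (hA : 0 < A) (hAB : A ≤ B)
    (hsum : ∀ f : H, Summable fun j =>
      ((v j : ℂ) ^ 2) * ⟪(Λ j) (proj (W j) (U f)), (Λ j) (proj (W j) (T f))⟫)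
    (hlower : ∀ f : H, A * ‖f‖ ^ 2
      ≤ ∑' j, (v j) ^ 2 * (⟪(Λ j) (proj (W j) (U f)), (Λ j) (proj (W j) (T f))⟫).re)
    (hupper : ∀ f : H,
      (∑' j, (v j) ^ 2 * (⟪(Λ j) (proj (W j) (U f)), (Λ j) (proj (W j) (T f))⟫).re)
        ≤ B * ‖f‖ ^ 2)
    -- `S_C` is the frame operator of `Λ_TU`
    (SC : H →L[ℂ] H)
    (hSC : ∀ f : H, HasSum
      (fun j => (v j) ^ 2 •
        (adjoint T) (proj (W j) ((adjoint (Λ j)) ((Λ j) (proj (W j) (U f)))))) (SC f))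
    -- `S = S_C⁻¹` commutes with `T` and `U`
    (S : H →L[ℂ] H)
    (hS₁ : S ∘L SC = 1) (hS₂ : SC ∘L S = 1)
    (hST : S ∘L T = T ∘L S) (hSU : S ∘L U = U ∘L S) :
    ∀ f : H,
      HasSum
        (fun j => (v j) ^ 2 •
          (adjoint T) (proj (W j) ((adjoint (Λ j)) ((Λ j) (proj (W j) (S (U f))))))) f := by
  intro f
  have h := hSC (S f)
  have h1 : U (S f) = S (U f) := by
    have := congrArg (fun L : H →L[ℂ] H => L f) hSU
    simpa using this.symm
  have h2 : SC (S f) = f := by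
    have := congrArg (fun L : H →L[ℂ] H => L f) hS₂
    simpa using this
  rw [h1, h2] at h
  exact h
end

section
/- Let Λ_T = {(W_j, Λ_j, v_j)}_{j∈J} be a (T,T)-controlled g-fusion Bessel sequence in H with bound B, i.e., ∑_{j∈J} v_j² ‖Λ_j P_{W_j} T f‖² ≤ B‖f‖² for all f ∈ H, where T and U are bounded invertible operators on H. Suppose the family {v_j² T* P_{W_j} Λ_j* Λ_j P_{W_j} U}_{j∈J} is a resolution of the identity on H, i.e., f = ∑_{j∈J} v_j² T* P_{W_j} Λ_j* Λ_j P_{W_j} U f for every f ∈ H. Then for every f ∈ H the series ∑_{j∈J} v_j² ‖Λ_j P_{W_j} U f‖² converges and (1/B) ‖f‖² ≤ ∑_{j∈J} v_j² ‖Λ_j P_{W_j} U f‖² ≤ B ‖T^{-1}‖² ‖U‖² ‖f‖²; that is, Λ_T is a (U,U)-controlled g-fusion frame for H. -/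
open ContinuousLinearMap
open scoped ComplexInnerProductSpace

lemma amgm_aux {B a b : ℝ} (hB : 0 < B) :
    a * b ≤ 1 / (2 * B) * a ^ 2 + B / 2 * b ^ 2 := by
  have h : 1 / (2 * B) * a ^ 2 + B / 2 * b ^ 2 - a * b = (a - B * b) ^ 2 / (2 * B) := by
    field_simp; ring
  nlinarith [sq_nonneg (a - B * b), div_nonneg (sq_nonneg (a - B * b)) (by linarith : (0:ℝ) ≤ 2 * B)]

/-- if `Λ_T` is a `(T,T)`-controlled g-fusion Bessel sequence with bound `B`
and `{v_j² T* P_{W_j} Λ_j* Λ_j P_{W_j} U}` is a resolution of the identity on `H`, then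
`Λ_T` is a `(U,U)`-controlled g-fusion frame for `H` with bounds `1/B` and
`B ‖T⁻¹‖² ‖U‖²`. -/
theorem stmt9
    {H : Type*} [NormedAddCommGroup H] [InnerProductSpace ℂ H] [CompleteSpace H]
    {J : Type*} [Countable J]
    {Hj : J → Type*} [∀ j, NormedAddCommGroup (Hj j)] [∀ j, InnerProductSpace ℂ (Hj j)]
    [∀ j, CompleteSpace (Hj j)]
    (W : J → Submodule ℂ H) [∀ j, CompleteSpace (W j)]
    (v : J → ℝ) (hv : ∀ j, 0 < v j)
    (Λ : ∀ j, H →L[ℂ] Hj j)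
    (T U : H →L[ℂ] H)
    -- `T` and `U` are invertible
    (Tinv Uinv : H →L[ℂ] H)
    (hT₁ : Tinv ∘L T = 1) (hT₂ : T ∘L Tinv = 1)
    (hU₁ : Uinv ∘L U = 1) (hU₂ : U ∘L Uinv = 1)
    -- `Λ_T` is a `(T,T)`-controlled g-fusion Bessel sequence with bound `B`
    (B : ℝ) (hB : 0 < B)
    (hsumT : ∀ f : H, Summable fun j => (v j) ^ 2 * ‖(Λ j) (proj (W j) (T f))‖ ^ 2)
    (hBessel : ∀ f : H,
      (∑' j, (v j) ^ 2 * ‖(Λ j) (proj (W j) (T f))‖ ^ 2) ≤ B * ‖f‖ ^ 2)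
    -- `{v_j² T* P_{W_j} Λ_j* Λ_j P_{W_j} U}` is a resolution of the identity on `H`
    (hres : ∀ f : H, HasSum
      (fun j => (v j) ^ 2 •
        (adjoint T) (proj (W j) ((adjoint (Λ j)) ((Λ j) (proj (W j) (U f)))))) f) :
    ∀ f : H,
      (Summable fun j => (v j) ^ 2 * ‖(Λ j) (proj (W j) (U f))‖ ^ 2) ∧
      (1 / B) * ‖f‖ ^ 2 ≤ (∑' j, (v j) ^ 2 * ‖(Λ j) (proj (W j) (U f))‖ ^ 2) ∧
      (∑' j, (v j) ^ 2 * ‖(Λ j) (proj (W j) (U f))‖ ^ 2)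
        ≤ B * ‖Tinv‖ ^ 2 * ‖U‖ ^ 2 * ‖f‖ ^ 2 := by

  intro f
  have hTg : T (Tinv (U f)) = U f := by
    have := congrArg (fun L : H →L[ℂ] H => L (U f)) hT₂
    simpa using this
  have hsumU : Summable fun j => (v j) ^ 2 * ‖(Λ j) (proj (W j) (U f))‖ ^ 2 := by
    have h := hsumT (Tinv (U f))
    rwa [hTg] at h
  have hnormU : ‖Tinv (U f)‖ ≤ ‖Tinv‖ * (‖U‖ * ‖f‖) :=
    le_trans (Tinv.le_opNorm _) (by
      have := U.le_opNorm f
      exact mul_le_mul_of_nonneg_left this (norm_nonneg _))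
  have hupper : (∑' j, (v j) ^ 2 * ‖(Λ j) (proj (W j) (U f))‖ ^ 2)
      ≤ B * ‖Tinv‖ ^ 2 * ‖U‖ ^ 2 * ‖f‖ ^ 2 := by
    have h1 := hBessel (Tinv (U f))
    rw [hTg] at h1
    refine h1.trans ?_
    have h2 : ‖Tinv (U f)‖ ^ 2 ≤ ‖Tinv‖ ^ 2 * ‖U‖ ^ 2 * ‖f‖ ^ 2 := by
      nlinarith [norm_nonneg (Tinv (U f)), norm_nonneg Tinv, norm_nonneg U, norm_nonneg f,
        hnormU]
    nlinarith [hB]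
  -- Lower bound
  have hproj : ∀ j (x : H), proj (W j) x = ((Submodule.orthogonalProjectionOnto (W j) x : W j) : H) :=
    fun j x => rfl
  have hterm : ∀ j,
      ⟪f, (v j) ^ 2 • (adjoint T) (proj (W j) ((adjoint (Λ j)) ((Λ j) (proj (W j) (U f)))))⟫
        = ((v j : ℂ)) ^ 2 * ⟪(Λ j) (proj (W j) (T f)), (Λ j) (proj (W j) (U f))⟫ := by
    intro j
    rw [show ((v j) ^ 2 • (adjoint T) (proj (W j) ((adjoint (Λ j)) ((Λ j) (proj (W j) (U f))))))
        = (((v j : ℂ)) ^ 2) • (adjoint T) (proj (W j) ((adjoint (Λ j)) ((Λ j) (proj (W j) (U f)))))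
        from by norm_cast]
    rw [inner_smul_right]
    congr 1
    rw [ContinuousLinearMap.adjoint_inner_right]
    rw [hproj, hproj]
    rw [show ∀ x y : H, ⟪x, ((W j).orthogonalProjectionOnto y : H)⟫
        = ⟪((W j).orthogonalProjectionOnto x : H), y⟫ from fun x y => by
      have h := (Submodule.inner_starProjection_left_eq_right (W j) x y).symm
      rwa [Submodule.starProjection_apply, Submodule.starProjection_apply] at h]
    rw [← hproj]
    rw [ContinuousLinearMap.adjoint_inner_right]
  have hsum1 : HasSum
      (fun j => (v j) ^ 2 * Complex.re ⟪(Λ j) (proj (W j) (T f)), (Λ j) (proj (W j) (U f))⟫)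
      (‖f‖ ^ 2) := by
    have h0 := (hres f).mapL (innerSL ℂ f)
    have h1 : HasSum
        (fun j => ((v j : ℂ)) ^ 2 * ⟪(Λ j) (proj (W j) (T f)), (Λ j) (proj (W j) (U f))⟫)
        (⟪f, f⟫) := by
      simp only [innerSL_apply_apply] at h0
      rwa [funext hterm] at h0
    have h2 := h1.mapL Complex.reCLM
    have h3 : (fun j => Complex.reCLM
          (((v j : ℂ)) ^ 2 * ⟪(Λ j) (proj (W j) (T f)), (Λ j) (proj (W j) (U f))⟫))
        = fun j => (v j) ^ 2 * Complex.re ⟪(Λ j) (proj (W j) (T f)), (Λ j) (proj (W j) (U f))⟫ := by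
      funext j
      rw [show ((v j : ℂ)) ^ 2 = (((v j) ^ 2 : ℝ) : ℂ) by norm_cast,
        Complex.reCLM_apply, Complex.re_ofReal_mul]
    rw [h3] at h2
    have h4 : Complex.reCLM ⟪f, f⟫ = ‖f‖ ^ 2 := by
      rw [inner_self_eq_norm_sq_to_K]
      simp [Complex.reCLM_apply]
      norm_cast
    rwa [h4] at h2
  have hptbound : ∀ j,
      (v j) ^ 2 * Complex.re ⟪(Λ j) (proj (W j) (T f)), (Λ j) (proj (W j) (U f))⟫
        ≤ (1 / (2 * B)) * ((v j) ^ 2 * ‖(Λ j) (proj (W j) (T f))‖ ^ 2)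
          + (B / 2) * ((v j) ^ 2 * ‖(Λ j) (proj (W j) (U f))‖ ^ 2) := by
    intro j
    set a := ‖(Λ j) (proj (W j) (T f))‖ with ha
    set b := ‖(Λ j) (proj (W j) (U f))‖ with hb
    set r := Complex.re ⟪(Λ j) (proj (W j) (T f)), (Λ j) (proj (W j) (U f))⟫ with hr
    have h1 : r ≤ a * b := re_inner_le_norm (𝕜 := ℂ) _ _
    have h2 : a * b ≤ 1 / (2 * B) * a ^ 2 + B / 2 * b ^ 2 := amgm_aux hB
    nlinarith [sq_nonneg (v j), mul_le_mul_of_nonneg_left (h1.trans h2) (sq_nonneg (v j))]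
  have hsumRHS : Summable fun j =>
      (1 / (2 * B)) * ((v j) ^ 2 * ‖(Λ j) (proj (W j) (T f))‖ ^ 2)
        + (B / 2) * ((v j) ^ 2 * ‖(Λ j) (proj (W j) (U f))‖ ^ 2) :=
    ((hsumT f).mul_left _).add (hsumU.mul_left _)
  have hlow1 : ‖f‖ ^ 2 ≤ (1 / (2 * B)) * (∑' j, (v j) ^ 2 * ‖(Λ j) (proj (W j) (T f))‖ ^ 2)
      + (B / 2) * (∑' j, (v j) ^ 2 * ‖(Λ j) (proj (W j) (U f))‖ ^ 2) := by
    have h1 : ‖f‖ ^ 2 = ∑' j, (v j) ^ 2 *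
        Complex.re ⟪(Λ j) (proj (W j) (T f)), (Λ j) (proj (W j) (U f))⟫ := hsum1.tsum_eq.symm
    rw [h1]
    have h2 := Summable.tsum_le_tsum hptbound hsum1.summable hsumRHS
    refine h2.trans_eq ?_
    rw [Summable.tsum_add ((hsumT f).mul_left _) (hsumU.mul_left _), tsum_mul_left, tsum_mul_left]
  have hlow : (1 / B) * ‖f‖ ^ 2 ≤ ∑' j, (v j) ^ 2 * ‖(Λ j) (proj (W j) (U f))‖ ^ 2 := by
    have hT := hBessel f
    have hBpos := hB
    have hpos : (0:ℝ) < 1 / (2 * B) := by positivity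
    have h5 := mul_le_mul_of_nonneg_left hT (le_of_lt hpos)
    have h6 : 1 / (2 * B) * (B * ‖f‖ ^ 2) = ‖f‖ ^ 2 / 2 := by field_simp
    rw [div_mul_eq_mul_div, one_mul, div_le_iff₀ hBpos]
    nlinarith [hlow1, h5, h6]
  exact ⟨hsumU, hlow, hupper⟩
end

section
/- Let T be a bounded invertible operator on H and let Λ_T = {(W_j, Λ_j, w_j)}_{j∈J} be a (T,T)-controlled g-fusion Bessel sequence in H. Then Λ_T is a (T,T)-controlled g-fusion frame for H (i.e., there exists A > 0 with A‖f‖² ≤ ∑_{j∈J} w_j² ‖Λ_j P_{W_j} T f‖² for all f) if and only if there exist a bounded invertible operator U on H, closed subspaces V_j ⊆ H, bounded operators Γ_j : H → H_j, positive weights v_j, and constants D > 0 and m > 0 such that {(V_j, Γ_j, v_j)}_{j∈J} is a (U,U)-controlled g-fusion Bessel sequence with bound D and for every f ∈ H the series S_{UΓΛT} f = ∑_{j∈J} v_j w_j U* P_{V_j} Γ_j* Λ_j P_{W_j} T f converges in H with Re⟨S_{UΓΛT} f, f⟩ ≥ m‖f‖². -/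
open ContinuousLinearMap
open scoped ComplexInnerProductSpace

/-- The orthogonal projection with the completeness witness given explicitly (used inside
existential quantifiers over families of closed subspaces). -/
noncomputable def projC {H : Type*} [NormedAddCommGroup H] [InnerProductSpace ℂ H]
    (W : Submodule ℂ H) (h : CompleteSpace W) : H →L[ℂ] H :=
  letI := h
  W.subtypeL.comp (Submodule.orthogonalProjectionOnto W)

/-- Cauchy–Schwarz for `tsum`. -/
lemma tsum_cs {J : Type*} {a b : J → ℝ} (ha : ∀ j, 0 ≤ a j) (hb : ∀ j, 0 ≤ b j)
    (ha2 : Summable fun j => a j ^ 2) (hb2 : Summable fun j => b j ^ 2) :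
    Summable (fun j => a j * b j) ∧
      ∑' j, a j * b j ≤ Real.sqrt (∑' j, a j ^ 2) * Real.sqrt (∑' j, b j ^ 2) := by
  have hsum : Summable (fun j => a j * b j) := by
    refine (ha2.add hb2).of_nonneg_of_le (fun j => mul_nonneg (ha j) (hb j)) (fun j => ?_)
    nlinarith [sq_nonneg (a j - b j)]
  refine ⟨hsum, Summable.tsum_le_of_sum_le hsum (fun t => ?_)⟩
  have hA : (0:ℝ) ≤ ∑' j, a j ^ 2 := tsum_nonneg (fun j => sq_nonneg _)
  have hB : (0:ℝ) ≤ ∑' j, b j ^ 2 := tsum_nonneg (fun j => sq_nonneg _)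
  have h1 : (∑ j ∈ t, a j * b j) ^ 2 ≤ (∑ j ∈ t, a j ^ 2) * ∑ j ∈ t, b j ^ 2 :=
    Finset.sum_mul_sq_le_sq_mul_sq t a b
  have h2 : (∑ j ∈ t, a j ^ 2) ≤ ∑' j, a j ^ 2 :=
    Summable.sum_le_tsum t (fun j _ => sq_nonneg _) ha2
  have h3 : (∑ j ∈ t, b j ^ 2) ≤ ∑' j, b j ^ 2 :=
    Summable.sum_le_tsum t (fun j _ => sq_nonneg _) hb2
  have h4 : (∑ j ∈ t, a j * b j) ^ 2 ≤ (∑' j, a j ^ 2) * ∑' j, b j ^ 2 := by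
    calc (∑ j ∈ t, a j * b j) ^ 2 ≤ (∑ j ∈ t, a j ^ 2) * ∑ j ∈ t, b j ^ 2 := h1
    _ ≤ (∑' j, a j ^ 2) * ∑' j, b j ^ 2 := by
        apply mul_le_mul h2 h3 (Finset.sum_nonneg fun j _ => sq_nonneg _) hA
  have h5 : (∑ j ∈ t, a j * b j) ≤ Real.sqrt ((∑' j, a j ^ 2) * ∑' j, b j ^ 2) := by
    rw [Real.le_sqrt (Finset.sum_nonneg fun j _ => mul_nonneg (ha j) (hb j))]
    · exact h4
    · exact mul_nonneg hA hB
  rwa [Real.sqrt_mul hA] at h5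

lemma projC_top' {H : Type*} [NormedAddCommGroup H] [InnerProductSpace ℂ H]
    (h : CompleteSpace (⊤ : Submodule ℂ H)) (x : H) :
    projC (⊤ : Submodule ℂ H) h x = x := by
  letI := h
  exact Submodule.starProjection_eq_self_iff.mpr Submodule.mem_top

lemma bessel_summable {H : Type*} [NormedAddCommGroup H] [InnerProductSpace ℂ H] [CompleteSpace H]
    {J : Type*} {Hj : J → Type*} [∀ j, NormedAddCommGroup (Hj j)]
    [∀ j, InnerProductSpace ℂ (Hj j)] [∀ j, CompleteSpace (Hj j)]
    (K : ∀ j, H →L[ℂ] Hj j) (c : J → ℝ) (hc : ∀ j, 0 ≤ c j) (D : ℝ) (hD : 0 ≤ D)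
    (hsum : ∀ x : H, Summable fun j => c j * ‖K j x‖ ^ 2)
    (hb : ∀ x : H, (∑' j, c j * ‖K j x‖ ^ 2) ≤ D * ‖x‖ ^ 2) (f : H) :
    Summable fun j => c j • (adjoint (K j) (K j f)) := by
  rw [summable_iff_vanishing_norm]
  intro ε hε
  obtain ⟨s, hs⟩ := summable_iff_vanishing_norm.1 (hsum f) (ε ^ 2 / (D + 1)) (by positivity)
  refine ⟨s, fun t ht => ?_⟩
  set x := ∑ j ∈ t, c j • adjoint (K j) (K j f) with hx
  set St := ∑ j ∈ t, c j * ‖K j f‖ ^ 2 with hSt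
  have hStnn : 0 ≤ St := Finset.sum_nonneg fun j _ =>
    mul_nonneg (hc j) (sq_nonneg _)
  have hSt_lt : St < ε ^ 2 / (D + 1) := by
    have := hs t ht
    rwa [Real.norm_eq_abs, abs_of_nonneg hStnn] at this
  -- key norm bound : ‖x‖ ^ 2 ≤ Real.sqrt St * (Real.sqrt D * ‖x‖)
  have key : ‖x‖ ^ 2 ≤ Real.sqrt St * (Real.sqrt D * ‖x‖) := by
    have e1 : ‖x‖ ^ 2 = ∑ j ∈ t, c j * RCLike.re ⟪K j f, K j x⟫ := by
      rw [← inner_self_eq_norm_sq (𝕜 := ℂ) x]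
      nth_rewrite 1 [hx]
      rw [sum_inner, map_sum]
      refine Finset.sum_congr rfl fun j hj => ?_
      rw [RCLike.real_smul_eq_coe_smul (K := ℂ), inner_smul_left, adjoint_inner_left,
        RCLike.conj_ofReal]
      simp [RCLike.re_to_complex, Complex.mul_re]
    have e2 : ∀ j ∈ t, c j * RCLike.re ⟪K j f, K j x⟫ ≤
        (Real.sqrt (c j) * ‖K j f‖) * (Real.sqrt (c j) * ‖K j x‖) := by
      intro j hj
      have h0 := re_inner_le_norm (𝕜 := ℂ) (K j f) (K j x)
      have hcj : Real.sqrt (c j) * Real.sqrt (c j) = c j := Real.mul_self_sqrt (hc j)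
      have h1 := mul_le_mul_of_nonneg_left h0 (hc j)
      have h2 : (Real.sqrt (c j) * ‖K j f‖) * (Real.sqrt (c j) * ‖K j x‖)
          = c j * (‖K j f‖ * ‖K j x‖) := by rw [mul_mul_mul_comm, hcj]
      linarith
    have e3 : (∑ j ∈ t, (Real.sqrt (c j) * ‖K j f‖) * (Real.sqrt (c j) * ‖K j x‖)) ≤
        Real.sqrt St * Real.sqrt (∑ j ∈ t, c j * ‖K j x‖ ^ 2) := by
      have h1 := Finset.sum_mul_sq_le_sq_mul_sq t (fun j => Real.sqrt (c j) * ‖K j f‖)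
        (fun j => Real.sqrt (c j) * ‖K j x‖)
      have h2 : ∀ (y : H) (j : J), (Real.sqrt (c j) * ‖K j y‖) ^ 2 = c j * ‖K j y‖ ^ 2 := by
        intro y j
        rw [mul_pow, Real.sq_sqrt (hc j)]
      simp only [h2] at h1
      have hnn : 0 ≤ ∑ j ∈ t, (Real.sqrt (c j) * ‖K j f‖) * (Real.sqrt (c j) * ‖K j x‖) :=
        Finset.sum_nonneg fun j _ => mul_nonneg (by positivity) (by positivity)
      calc (∑ j ∈ t, (Real.sqrt (c j) * ‖K j f‖) * (Real.sqrt (c j) * ‖K j x‖))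
          = Real.sqrt ((∑ j ∈ t, (Real.sqrt (c j) * ‖K j f‖) * (Real.sqrt (c j) * ‖K j x‖)) ^ 2) :=
            (Real.sqrt_sq hnn).symm
        _ ≤ Real.sqrt (St * ∑ j ∈ t, c j * ‖K j x‖ ^ 2) := Real.sqrt_le_sqrt h1
        _ = Real.sqrt St * Real.sqrt (∑ j ∈ t, c j * ‖K j x‖ ^ 2) := Real.sqrt_mul hStnn _
    have e4 : Real.sqrt (∑ j ∈ t, c j * ‖K j x‖ ^ 2) ≤ Real.sqrt D * ‖x‖ := by
      have h1 : (∑ j ∈ t, c j * ‖K j x‖ ^ 2) ≤ D * ‖x‖ ^ 2 :=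
        le_trans (Summable.sum_le_tsum t (fun j _ => mul_nonneg (hc j) (sq_nonneg _)) (hsum x)) (hb x)
      calc Real.sqrt (∑ j ∈ t, c j * ‖K j x‖ ^ 2) ≤ Real.sqrt (D * ‖x‖ ^ 2) :=
            Real.sqrt_le_sqrt h1
        _ = Real.sqrt D * ‖x‖ := by
            rw [Real.sqrt_mul hD, Real.sqrt_sq (norm_nonneg _)]
    calc ‖x‖ ^ 2 = ∑ j ∈ t, c j * RCLike.re ⟪K j f, K j x⟫ := e1
      _ ≤ ∑ j ∈ t, (Real.sqrt (c j) * ‖K j f‖) * (Real.sqrt (c j) * ‖K j x‖) :=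
          Finset.sum_le_sum e2
      _ ≤ Real.sqrt St * Real.sqrt (∑ j ∈ t, c j * ‖K j x‖ ^ 2) := e3
      _ ≤ Real.sqrt St * (Real.sqrt D * ‖x‖) := by
          exact mul_le_mul_of_nonneg_left e4 (Real.sqrt_nonneg _)
  -- conclude ‖x‖ < ε
  rcases eq_or_lt_of_le (norm_nonneg x) with h0 | h0
  · rw [← h0]; exact hε
  · have hle : ‖x‖ ≤ Real.sqrt St * Real.sqrt D := by
      have := key
      nlinarith
    have hlt : Real.sqrt St * Real.sqrt D < ε := by
      have h1 : St * D < ε ^ 2 := by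
        calc St * D ≤ (ε ^ 2 / (D + 1)) * D :=
              mul_le_mul_of_nonneg_right (le_of_lt hSt_lt) hD
          _ < (ε ^ 2 / (D + 1)) * (D + 1) := by
              apply mul_lt_mul_of_pos_left (by linarith) (by positivity)
          _ = ε ^ 2 := by field_simp
      have h2 : Real.sqrt St * Real.sqrt D = Real.sqrt (St * D) := (Real.sqrt_mul hStnn _).symm
      rw [h2, show ε = Real.sqrt (ε ^ 2) from (Real.sqrt_sq hε.le).symm]
      exact Real.sqrt_lt_sqrt (by positivity) h1
    linarith

lemma projC_inner_symm {H : Type*} [NormedAddCommGroup H] [InnerProductSpace ℂ H]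
    {V : Submodule ℂ H} (h : CompleteSpace V) (u z : H) :
    ⟪u, projC V h z⟫ = ⟪projC V h u, z⟫ := by
  letI := h
  exact (Submodule.inner_starProjection_left_eq_right V u z).symm

/-- a `(T,T)`-controlled g-fusion Bessel sequence `Λ_T` is a
`(T,T)`-controlled g-fusion frame for `H` iff there exist a bounded invertible `U`,
closed subspaces `V_j`, bounded `Γ_j : H → H_j`, positive weights `v_j` and constants
`D, m > 0` such that `{(V_j, Γ_j, v_j)}` is a `(U,U)`-controlled g-fusion Bessel sequence
with bound `D` and the operator `S_{UΓΛT} f = ∑_j v_j w_j U* P_{V_j} Γ_j* Λ_j P_{W_j} T f`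
satisfies `Re⟪S_{UΓΛT} f, f⟫ ≥ m ‖f‖²` for all `f`. -/
theorem stmt10
    {H : Type*} [NormedAddCommGroup H] [InnerProductSpace ℂ H] [CompleteSpace H]
    {J : Type*} [Countable J]
    {Hj : J → Type*} [∀ j, NormedAddCommGroup (Hj j)] [∀ j, InnerProductSpace ℂ (Hj j)]
    [∀ j, CompleteSpace (Hj j)]
    (W : J → Submodule ℂ H) [∀ j, CompleteSpace (W j)]
    (w : J → ℝ) (hw : ∀ j, 0 < w j)
    (Λ : ∀ j, H →L[ℂ] Hj j)
    (T : H →L[ℂ] H)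
    -- `T` is invertible
    (Tinv : H →L[ℂ] H) (hT₁ : Tinv ∘L T = 1) (hT₂ : T ∘L Tinv = 1)
    -- `Λ_T` is a `(T,T)`-controlled g-fusion Bessel sequence in `H`
    (D₀ : ℝ) (hD₀ : 0 < D₀)
    (hsumT : ∀ f : H, Summable fun j => (w j) ^ 2 * ‖(Λ j) (proj (W j) (T f))‖ ^ 2)
    (hBessel : ∀ f : H,
      (∑' j, (w j) ^ 2 * ‖(Λ j) (proj (W j) (T f))‖ ^ 2) ≤ D₀ * ‖f‖ ^ 2) :
    (∃ A > 0, ∀ f : H,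
        A * ‖f‖ ^ 2 ≤ ∑' j, (w j) ^ 2 * ‖(Λ j) (proj (W j) (T f))‖ ^ 2) ↔
    (∃ (Uop Uinv : H →L[ℂ] H), Uinv ∘L Uop = 1 ∧ Uop ∘L Uinv = 1 ∧
      ∃ (Vs : J → Submodule ℂ H) (hcl : ∀ j, CompleteSpace (Vs j))
        (Γ : ∀ j, H →L[ℂ] Hj j) (v : J → ℝ),
        (∀ j, 0 < v j) ∧
        (∃ D > 0, ∀ f : H,
          (Summable fun j => (v j) ^ 2 * ‖(Γ j) (projC (Vs j) (hcl j) (Uop f))‖ ^ 2) ∧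
          (∑' j, (v j) ^ 2 * ‖(Γ j) (projC (Vs j) (hcl j) (Uop f))‖ ^ 2) ≤ D * ‖f‖ ^ 2) ∧
        (∃ m > 0, ∀ f : H, ∃ s : H,
          HasSum
            (fun j => (v j * w j) •
              (adjoint Uop) (projC (Vs j) (hcl j)
                ((adjoint (Γ j)) ((Λ j) (proj (W j) (T f)))))) s ∧
          m * ‖f‖ ^ 2 ≤ (⟪s, f⟫).re)) := by
  constructor
  · rintro ⟨A, hA, hAf⟩
    set K : ∀ j, H →L[ℂ] Hj j := fun j => (Λ j).comp ((proj (W j)).comp T) with hKdef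
    have htop : CompleteSpace (⊤ : Submodule ℂ H) := by
      have hcl : IsClosed ((⊤ : Submodule ℂ H) : Set H) := by
        rw [Submodule.top_coe]; exact isClosed_univ
      exact hcl.completeSpace_coe
    refine ⟨1, 1, by ext x; simp, by ext x; simp, fun _ => ⊤, fun _ => htop,
      K, w, hw, ?_, ?_⟩
    · refine ⟨D₀, hD₀, fun f => ?_⟩
      have hfun : (fun j => (w j) ^ 2 * ‖(K j) (projC ⊤ htop ((1 : H →L[ℂ] H) f))‖ ^ 2)
          = fun j => (w j) ^ 2 * ‖(Λ j) (proj (W j) (T f))‖ ^ 2 := by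
        funext j
        rw [ContinuousLinearMap.one_apply, projC_top']
        rfl
      beta_reduce
      exact ⟨hfun ▸ hsumT f, by rw [hfun]; exact hBessel f⟩
    · refine ⟨A, hA, fun f => ?_⟩
      have hsummable : Summable fun j => ((w j) ^ 2) • (adjoint (K j) (K j f)) :=
        bessel_summable K (fun j => (w j) ^ 2) (fun j => sq_nonneg _) D₀ hD₀.le
          (fun x => hsumT x) (fun x => hBessel x) f
      refine ⟨∑' j, ((w j) ^ 2) • (adjoint (K j) (K j f)), ?_, ?_⟩
      · have hfun : (fun j => (w j * w j) •
            (adjoint (1 : H →L[ℂ] H)) (projC ⊤ htop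
              ((adjoint (K j)) ((Λ j) (proj (W j) (T f))))))
            = fun j => ((w j) ^ 2) • (adjoint (K j) (K j f)) := by
          funext j
          rw [← sq, show (1 : H →L[ℂ] H) = ContinuousLinearMap.id ℂ H from rfl, adjoint_id]
          rw [show ((ContinuousLinearMap.id ℂ H) (projC ⊤ htop
              ((adjoint (K j)) ((Λ j) (proj (W j) (T f))))))
            = projC ⊤ htop ((adjoint (K j)) ((Λ j) (proj (W j) (T f)))) from rfl]
          rw [projC_top']
          rfl
        beta_reduce
        rw [hfun]
        exact hsummable.hasSum
      · set s := ∑' j, ((w j) ^ 2) • (adjoint (K j) (K j f)) with hsdef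
        have hs := hsummable.hasSum
        have h1 : HasSum (fun j => ((innerSL ℂ f) (((w j) ^ 2) • (adjoint (K j) (K j f)))).re)
            ((⟪f, s⟫ : ℂ).re) := Complex.hasSum_re ((innerSL ℂ f).hasSum hs)
        have h2 : (fun j => ((innerSL ℂ f) (((w j) ^ 2) • (adjoint (K j) (K j f)))).re)
            = fun j => (w j) ^ 2 * ‖K j f‖ ^ 2 := by
          funext j
          rw [innerSL_apply_apply, RCLike.real_smul_eq_coe_smul (K := ℂ), inner_smul_right,
            adjoint_inner_right, inner_self_eq_norm_sq_to_K]
          norm_cast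
        rw [h2] at h1
        have h3 : (⟪s, f⟫ : ℂ).re = (⟪f, s⟫ : ℂ).re := by
          simpa using inner_re_symm (𝕜 := ℂ) s f
        rw [h3, ← h1.tsum_eq]
        exact hAf f
  · rintro ⟨U, Uinv, hU1, hU2, Vs, hcl, Γ, v, hv, ⟨D, hD, hDf⟩, m, hm, hS⟩
    refine ⟨m ^ 2 / D, by positivity, fun f => ?_⟩
    obtain ⟨s, hsum_s, hms⟩ := hS f
    set a : J → ℝ := fun j => w j * ‖(Λ j) (proj (W j) (T f))‖ with ha
    set b : J → ℝ := fun j => v j * ‖(Γ j) (projC (Vs j) (hcl j) (U f))‖ with hb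
    have ha0 : ∀ j, 0 ≤ a j := fun j => mul_nonneg (hw j).le (norm_nonneg _)
    have hb0 : ∀ j, 0 ≤ b j := fun j => mul_nonneg (hv j).le (norm_nonneg _)
    have ha2 : Summable fun j => a j ^ 2 := by simpa [ha, mul_pow] using hsumT f
    have hb2 : Summable fun j => b j ^ 2 := by simpa [hb, mul_pow] using (hDf f).1
    obtain ⟨hab, habs⟩ := tsum_cs ha0 hb0 ha2 hb2
    have h1 : HasSum (fun j => ((innerSL ℂ f) ((v j * w j) •
        (adjoint U) (projC (Vs j) (hcl j)
          ((adjoint (Γ j)) ((Λ j) (proj (W j) (T f))))))).re) ((⟪f, s⟫ : ℂ).re) :=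
      Complex.hasSum_re ((innerSL ℂ f).hasSum hsum_s)
    have h2 : ∀ j, ((innerSL ℂ f) ((v j * w j) •
        (adjoint U) (projC (Vs j) (hcl j)
          ((adjoint (Γ j)) ((Λ j) (proj (W j) (T f))))))).re ≤ a j * b j := by
      intro j
      have e : (innerSL ℂ f) ((v j * w j) •
          (adjoint U) (projC (Vs j) (hcl j)
            ((adjoint (Γ j)) ((Λ j) (proj (W j) (T f))))))
          = ((v j * w j : ℝ) : ℂ) *
            ⟪(Γ j) (projC (Vs j) (hcl j) (U f)), (Λ j) (proj (W j) (T f))⟫ := by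
        rw [innerSL_apply_apply, RCLike.real_smul_eq_coe_smul (K := ℂ), inner_smul_right,
          adjoint_inner_right, projC_inner_symm, adjoint_inner_right]
        rfl
      rw [e]
      have h3 := re_inner_le_norm (𝕜 := ℂ) ((Γ j) (projC (Vs j) (hcl j) (U f)))
        ((Λ j) (proj (W j) (T f)))
      simp only [RCLike.re_to_complex] at h3
      have hre : ((((v j * w j : ℝ)) : ℂ) *
          ⟪(Γ j) (projC (Vs j) (hcl j) (U f)), (Λ j) (proj (W j) (T f))⟫).re
          = (v j * w j) *
            (⟪(Γ j) (projC (Vs j) (hcl j) (U f)), (Λ j) (proj (W j) (T f))⟫).re := by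
        simp [Complex.mul_re]
      rw [hre]
      have hvw : (0:ℝ) ≤ v j * w j := mul_nonneg (hv j).le (hw j).le
      have h4 := mul_le_mul_of_nonneg_left h3 hvw
      simp only [ha, hb]
      nlinarith [h4]
    have h5 : (⟪f, s⟫ : ℂ).re ≤ ∑' j, a j * b j := by
      rw [← h1.tsum_eq]
      exact Summable.tsum_le_tsum h2 h1.summable hab
    have h6 : (⟪s, f⟫ : ℂ).re = (⟪f, s⟫ : ℂ).re := by
      simpa using inner_re_symm (𝕜 := ℂ) s f
    have hSb : (∑' j, b j ^ 2) ≤ D * ‖f‖ ^ 2 := by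
      have := (hDf f).2
      have heq : (∑' j, b j ^ 2) = ∑' j, (v j) ^ 2 * ‖(Γ j) (projC (Vs j) (hcl j) (U f))‖ ^ 2 := by
        congr 1; funext j; rw [hb, mul_pow]
      rw [heq]; exact this
    have hSann : (0:ℝ) ≤ ∑' j, a j ^ 2 := tsum_nonneg fun j => sq_nonneg _
    have h7 : Real.sqrt (∑' j, b j ^ 2) ≤ Real.sqrt D * ‖f‖ := by
      calc Real.sqrt (∑' j, b j ^ 2) ≤ Real.sqrt (D * ‖f‖ ^ 2) := Real.sqrt_le_sqrt hSb
        _ = Real.sqrt D * ‖f‖ := by rw [Real.sqrt_mul hD.le, Real.sqrt_sq (norm_nonneg _)]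
    have hkey : m * ‖f‖ ^ 2 ≤ Real.sqrt (∑' j, a j ^ 2) * (Real.sqrt D * ‖f‖) := by
      calc m * ‖f‖ ^ 2 ≤ (⟪s, f⟫ : ℂ).re := hms
        _ = (⟪f, s⟫ : ℂ).re := h6
        _ ≤ ∑' j, a j * b j := h5
        _ ≤ Real.sqrt (∑' j, a j ^ 2) * Real.sqrt (∑' j, b j ^ 2) := habs
        _ ≤ Real.sqrt (∑' j, a j ^ 2) * (Real.sqrt D * ‖f‖) :=
            mul_le_mul_of_nonneg_left h7 (Real.sqrt_nonneg _)
    have hgoal_eq : (∑' j, (w j) ^ 2 * ‖(Λ j) (proj (W j) (T f))‖ ^ 2) = ∑' j, a j ^ 2 := by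
      congr 1; funext j; rw [ha, mul_pow]
    rw [hgoal_eq]
    rcases eq_or_lt_of_le (norm_nonneg f) with h0 | h0
    · rw [← h0]
      simpa using hSann
    · rw [div_mul_eq_mul_div, div_le_iff₀ hD]
      have hsq1 : Real.sqrt (∑' j, a j ^ 2) ^ 2 = ∑' j, a j ^ 2 := Real.sq_sqrt hSann
      have hsq2 : Real.sqrt D ^ 2 = D := Real.sq_sqrt hD.le
      have h8 : (m * ‖f‖ ^ 2) ^ 2 ≤ (Real.sqrt (∑' j, a j ^ 2) * (Real.sqrt D * ‖f‖)) ^ 2 := by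
        apply pow_le_pow_left₀ (by positivity) hkey
      have h9 : (Real.sqrt (∑' j, a j ^ 2) * (Real.sqrt D * ‖f‖)) ^ 2
          = (∑' j, a j ^ 2) * D * ‖f‖ ^ 2 := by
        rw [mul_pow, mul_pow, hsq1, hsq2]; ring
      rw [h9] at h8
      have hf2 : (0:ℝ) < ‖f‖ ^ 2 := by positivity
      nlinarith [h8, hf2]
end

section
/- Let S_{TΛΓU} be the frame operator for the pair of a (T,T)-controlled g-fusion Bessel sequence Λ_T = {(W_j, Λ_j, w_j)}_{j∈J} with bound D₁ and a (U,U)-controlled g-fusion Bessel sequence Γ_U = {(V_j, Γ_j, v_j)}_{j∈J} with bound D₂. Suppose λ ∈ (0,1) is such that ‖f − S_{TΛΓU} f‖ ≤ λ ‖f‖ for all f ∈ H. Then for every f ∈ H, ((1 − λ)²/D₁) ‖f‖² ≤ ∑_{j∈J} v_j² ‖Γ_j P_{V_j} U f‖²; that is, Γ_U is a (U,U)-controlled g-fusion frame for H. -/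
open ContinuousLinearMap
open scoped ComplexInnerProductSpace

/-- if the frame operator `S_{TΛΓU}` of the pair `(Λ_T, Γ_U)` satisfies
`‖f − S f‖ ≤ λ ‖f‖` with `λ ∈ (0,1)`, then `Γ_U` is a `(U,U)`-controlled g-fusion
frame for `H` with lower bound `(1 − λ)² / D₁`. -/
theorem stmt14
    {H : Type*} [NormedAddCommGroup H] [InnerProductSpace ℂ H] [CompleteSpace H]
    {J : Type*} [Countable J]
    {Hj : J → Type*} [∀ j, NormedAddCommGroup (Hj j)] [∀ j, InnerProductSpace ℂ (Hj j)]
    [∀ j, CompleteSpace (Hj j)]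
    (W V : J → Submodule ℂ H) [∀ j, CompleteSpace (W j)] [∀ j, CompleteSpace (V j)]
    (w v : J → ℝ) (hw : ∀ j, 0 < w j) (hv : ∀ j, 0 < v j)
    (Λ Γ : ∀ j, H →L[ℂ] Hj j)
    (T U : H →L[ℂ] H)
    -- `T` and `U` are invertible
    (Tinv Uinv : H →L[ℂ] H)
    (hT₁ : Tinv ∘L T = 1) (hT₂ : T ∘L Tinv = 1)
    (hU₁ : Uinv ∘L U = 1) (hU₂ : U ∘L Uinv = 1)
    -- `Λ_T` is a `(T,T)`-controlled g-fusion Bessel sequence with bound `D₁`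
    (D₁ : ℝ) (hD₁ : 0 < D₁)
    (hsumΛ : ∀ f : H, Summable fun j => (w j) ^ 2 * ‖(Λ j) (proj (W j) (T f))‖ ^ 2)
    (hBesselΛ : ∀ f : H,
      (∑' j, (w j) ^ 2 * ‖(Λ j) (proj (W j) (T f))‖ ^ 2) ≤ D₁ * ‖f‖ ^ 2)
    -- `Γ_U` is a `(U,U)`-controlled g-fusion Bessel sequence with bound `D₂`
    (D₂ : ℝ) (hD₂ : 0 < D₂)
    (hsumΓ : ∀ f : H, Summable fun j => (v j) ^ 2 * ‖(Γ j) (proj (V j) (U f))‖ ^ 2)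
    (hBesselΓ : ∀ f : H,
      (∑' j, (v j) ^ 2 * ‖(Γ j) (proj (V j) (U f))‖ ^ 2) ≤ D₂ * ‖f‖ ^ 2)
    -- `S` is the frame operator `S_{TΛΓU}` for the pair `(Λ_T, Γ_U)`
    (S : H →L[ℂ] H)
    (hS : ∀ f : H, HasSum
      (fun j => (v j * w j) •
        (adjoint T) (proj (W j) ((adjoint (Λ j)) ((Γ j) (proj (V j) (U f)))))) (S f))
    (lam : ℝ) (hlam₀ : 0 < lam) (hlam₁ : lam < 1)
    (hpert : ∀ f : H, ‖f - S f‖ ≤ lam * ‖f‖) :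
    ∀ f : H,
      ((1 - lam) ^ 2 / D₁) * ‖f‖ ^ 2
        ≤ ∑' j, (v j) ^ 2 * ‖(Γ j) (proj (V j) (U f))‖ ^ 2 := by
  intro f
  set g := S f with hgdef
  set E := ∑' j, (v j) ^ 2 * ‖(Γ j) (proj (V j) (U f))‖ ^ 2 with hE
  have hEnn : 0 ≤ E := tsum_nonneg fun j => by positivity
  have hlow : (1 - lam) * ‖f‖ ≤ ‖g‖ := by
    have h1 := hpert f
    have h2 : ‖f‖ - ‖g‖ ≤ ‖f - g‖ := by
      simpa using norm_sub_norm_le f g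
    nlinarith [norm_nonneg f]
  -- the key inner product expansion
  have key : ∀ x : H, HasSum
      (fun j => ((v j * w j : ℝ) : ℂ) *
        ⟪(Λ j) (proj (W j) (T x)), (Γ j) (proj (V j) (U f))⟫) ⟪x, g⟫ := by
    intro x
    have h := (hS f).mapL (innerSL ℂ x)
    refine h.congr_fun fun j => ?_
    simp only [innerSL_apply_apply]
    symm
    have hproj : ⟪T x, proj (W j) ((adjoint (Λ j)) ((Γ j) (proj (V j) (U f))))⟫
        = ⟪proj (W j) (T x), (adjoint (Λ j)) ((Γ j) (proj (V j) (U f)))⟫ := by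
      exact (Submodule.inner_starProjection_left_eq_right (W j) _ _).symm
    rw [RCLike.real_smul_eq_coe_smul (K := ℂ), inner_smul_right, adjoint_inner_right, hproj,
      adjoint_inner_right]
    rfl
  set a := fun j => w j * ‖(Λ j) (proj (W j) (T g))‖ with ha_def
  set b := fun j => v j * ‖(Γ j) (proj (V j) (U f))‖ with hb_def
  have ha : ∀ j, 0 ≤ a j := fun j => mul_nonneg (hw j).le (norm_nonneg _)
  have hb : ∀ j, 0 ≤ b j := fun j => mul_nonneg (hv j).le (norm_nonneg _)
  have hrp : ∀ (x : ℝ), x ^ (2 : ℝ) = x ^ 2 := fun x => by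
    rw [show (2 : ℝ) = ((2 : ℕ) : ℝ) by norm_num, Real.rpow_natCast]
  have hsa : Summable fun j => a j ^ (2 : ℝ) := by
    refine (hsumΛ g).congr fun j => ?_
    rw [hrp]; simp [ha_def, mul_pow]
  have hsb : Summable fun j => b j ^ (2 : ℝ) := by
    refine (hsumΓ f).congr fun j => ?_
    rw [hrp]; simp [hb_def, mul_pow]
  have hconj : Real.HolderConjugate 2 2 := Real.HolderConjugate.two_two
  have hab_sum : Summable fun j => a j * b j :=
    Real.summable_mul_of_Lp_Lq_of_nonneg hconj ha hb hsa hsb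
  -- norm bound on each term
  have hterm : ∀ j, ‖((v j * w j : ℝ) : ℂ) *
      ⟪(Λ j) (proj (W j) (T g)), (Γ j) (proj (V j) (U f))⟫‖ ≤ a j * b j := by
    intro j
    rw [norm_mul, Complex.norm_real, Real.norm_eq_abs]
    have h1 : ‖⟪(Λ j) (proj (W j) (T g)), (Γ j) (proj (V j) (U f))⟫‖
        ≤ ‖(Λ j) (proj (W j) (T g))‖ * ‖(Γ j) (proj (V j) (U f))‖ :=
      norm_inner_le_norm _ _
    have h2 : |v j * w j| = v j * w j := abs_of_pos (mul_pos (hv j) (hw j))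
    rw [h2]
    calc (v j * w j) * ‖⟪(Λ j) (proj (W j) (T g)), (Γ j) (proj (V j) (U f))⟫‖
        ≤ (v j * w j) * (‖(Λ j) (proj (W j) (T g))‖ * ‖(Γ j) (proj (V j) (U f))‖) :=
          mul_le_mul_of_nonneg_left h1 (mul_pos (hv j) (hw j)).le
      _ = a j * b j := by simp only [ha_def, hb_def]; ring
  have hsum_norm : Summable fun j => ‖((v j * w j : ℝ) : ℂ) *
      ⟪(Λ j) (proj (W j) (T g)), (Γ j) (proj (V j) (U f))⟫‖ :=
    Summable.of_nonneg_of_le (fun j => norm_nonneg _) hterm hab_sum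
  -- ‖g‖² ≤ ∑ a b
  have hgsq : ‖g‖ ^ 2 ≤ ∑' j, a j * b j := by
    have h0 : (⟪g, g⟫ : ℂ) = ∑' j, ((v j * w j : ℝ) : ℂ) *
        ⟪(Λ j) (proj (W j) (T g)), (Γ j) (proj (V j) (U f))⟫ := (key g).tsum_eq.symm
    have h1 : ‖(⟪g, g⟫ : ℂ)‖ = ‖g‖ ^ 2 := by
      rw [inner_self_eq_norm_sq_to_K]; simp
    calc ‖g‖ ^ 2 = ‖(⟪g, g⟫ : ℂ)‖ := h1.symm
      _ ≤ ∑' j, ‖((v j * w j : ℝ) : ℂ) *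
          ⟪(Λ j) (proj (W j) (T g)), (Γ j) (proj (V j) (U f))⟫‖ := by
          rw [h0]; exact norm_tsum_le_tsum_norm hsum_norm
      _ ≤ ∑' j, a j * b j := Summable.tsum_le_tsum hterm hsum_norm hab_sum
  -- Cauchy-Schwarz
  have hCS : ∑' j, a j * b j ≤
      (∑' j, a j ^ (2 : ℝ)) ^ (1 / (2 : ℝ)) * (∑' j, b j ^ (2 : ℝ)) ^ (1 / (2 : ℝ)) :=
    Real.inner_le_Lp_mul_Lq_tsum_of_nonneg hconj ha hb hsa hsb
  have hAsum : (∑' j, a j ^ (2 : ℝ)) ≤ D₁ * ‖g‖ ^ 2 := by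
    refine le_trans (le_of_eq (tsum_congr fun j => ?_)) (hBesselΛ g)
    rw [hrp]; simp [ha_def, mul_pow]
  have hBsum : (∑' j, b j ^ (2 : ℝ)) = E := by
    refine tsum_congr fun j => ?_
    rw [hrp]; simp [hb_def, mul_pow]
  have hAnn : 0 ≤ ∑' j, a j ^ (2 : ℝ) := tsum_nonneg fun j => by
    rw [hrp]; positivity
  have hK : ‖g‖ ^ 2 ≤ Real.sqrt (D₁ * ‖g‖ ^ 2) * Real.sqrt E := by
    refine hgsq.trans (hCS.trans ?_)
    rw [← Real.sqrt_eq_rpow, ← Real.sqrt_eq_rpow, hBsum]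
    exact mul_le_mul_of_nonneg_right (Real.sqrt_le_sqrt hAsum) (Real.sqrt_nonneg _)
  have hs1 : Real.sqrt (D₁ * ‖g‖ ^ 2) = Real.sqrt D₁ * ‖g‖ := by
    rw [Real.sqrt_mul hD₁.le, Real.sqrt_sq (norm_nonneg g)]
  rw [hs1] at hK
  have hsqD : Real.sqrt D₁ ^ 2 = D₁ := Real.sq_sqrt hD₁.le
  have hsqE : Real.sqrt E ^ 2 = E := Real.sq_sqrt hEnn
  have hg_le : ‖g‖ ^ 2 ≤ D₁ * E := by
    nlinarith [sq_nonneg (‖g‖ - Real.sqrt D₁ * Real.sqrt E), Real.sqrt_nonneg D₁,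
      Real.sqrt_nonneg E, norm_nonneg g]
  rw [div_mul_eq_mul_div, div_le_iff₀ hD₁]
  have hposf : 0 ≤ (1 - lam) * ‖f‖ := mul_nonneg (by linarith) (norm_nonneg f)
  nlinarith [mul_le_mul hlow hlow hposf (norm_nonneg g)]
end
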